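/- Let X = [X_1; …; X_n] and Y = [Y_1; …; Y_n] in R^{nd×d} with each block invertible and σ_min(X_i) ≥ c, σ_min(Y_i) ≥ c for all i and some c > 0. Then for any Q ∈ O(d), √(Σ_i ‖P(X_i) − P((YQ)_i)‖_F²) ≤ (4/(2c)) · 2 · ‖X − YQ‖_F; in particular, d_F(P_n(X), P_n(Y)) ≤ (4/c)·d_F(X,Y), where P_n projects each block to its polar factor. -/

import Mathlib

/-!
Write `A = U₁ Σ₁ V₁ᵀ` and `B = U₂ Σ₂ V₂ᵀ` with singular values `≥ c`, so that `P(A) = U₁ V₁ᵀ` and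
`P(B) = U₂ V₂ᵀ`. Then `Z = U₁ᵀ (P(A) - P(B)) V₂ = V₁ᵀ V₂ - U₁ᵀ U₂` solves the Sylvester equation
`Σ₁ Z + Z Σ₂ = U₁ᵀ (A - B) V₂ - V₁ᵀ (A - B)ᵀ U₂`. Both terms on the right have Frobenius norm
`‖A - B‖_F` and the entries of `Z` are divided by `σᵢ + τⱼ ≥ 2c`, so
`‖P(A) - P(B)‖_F = ‖Z‖_F ≤ ‖A - B‖_F / c`. Since `P(B Q) = P(B) Q` for orthogonal `Q`, summing over
the blocks bounds the stacked polar factors for every `Q`, and taking the infimum over `Q` bounds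
`d_F`.
-/

open Matrix BigOperators

noncomputable def frob {m n : Type*} [Fintype m] [Fintype n] (A : Matrix m n ℝ) : ℝ :=
  Real.sqrt (∑ i, ∑ j, (A i j) ^ 2)

def IsOrtho {d : ℕ} (Q : Matrix (Fin d) (Fin d) ℝ) : Prop :=
  Q * Qᵀ = 1 ∧ Qᵀ * Q = 1

noncomputable def dF {m : Type*} [Fintype m] {d : ℕ}
    (X Y : Matrix m (Fin d) ℝ) : ℝ :=
  sInf {r : ℝ | ∃ Q : Matrix (Fin d) (Fin d) ℝ, IsOrtho Q ∧ r = frob (X - Y * Q)}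

def blk {n d : ℕ} (X : Matrix (Fin n × Fin d) (Fin d) ℝ) (i : Fin n) :
    Matrix (Fin d) (Fin d) ℝ :=
  Matrix.of fun a b => X (i, a) b

noncomputable def sv {d : ℕ} (A : Matrix (Fin d) (Fin d) ℝ) (i : Fin d) : ℝ :=
  Real.sqrt ((show (Aᵀ * A).IsHermitian from
    Matrix.isHermitian_conjTranspose_mul_self A).eigenvalues i)

noncomputable def smin {d : ℕ} (A : Matrix (Fin d) (Fin d) ℝ) : ℝ :=
  ⨅ i, sv A i

/-- Polar factor `P(M) = M (MᵀM)^{−1/2}`. -/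
noncomputable def polar {d : ℕ} (M : Matrix (Fin d) (Fin d) ℝ) :
    Matrix (Fin d) (Fin d) ℝ :=
  M * (((Matrix.posSemidef_conjTranspose_mul_self M).1.eigenvectorUnitary : Matrix (Fin d) (Fin d) ℝ) *
    Matrix.diagonal (Real.sqrt ∘ (Matrix.posSemidef_conjTranspose_mul_self M).1.eigenvalues) *
    (star (Matrix.posSemidef_conjTranspose_mul_self M).1.eigenvectorUnitary : Matrix (Fin d) (Fin d) ℝ))⁻¹

/-- Blockwise polar projection `P_n`. -/
noncomputable def Pn {n d : ℕ} (X : Matrix (Fin n × Fin d) (Fin d) ℝ) :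
    Matrix (Fin n × Fin d) (Fin d) ℝ :=
  Matrix.of fun p b => polar (blk X p.1) p.2 b

section Frobenius

variable {m n : Type*} [Fintype m] [Fintype n]

lemma frob_nonneg (A : Matrix m n ℝ) : 0 ≤ frob A :=
  Real.sqrt_nonneg _

lemma frob_sq (A : Matrix m n ℝ) : frob A ^ 2 = ∑ i, ∑ j, A i j ^ 2 :=
  Real.sq_sqrt (by positivity)

lemma frob_eq_sqrt_trace (A : Matrix m n ℝ) : frob A = Real.sqrt (Aᵀ * A).trace := by
  simp only [frob, trace, diag, mul_apply, transpose_apply, sq]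
  rw [Finset.sum_comm]

lemma frob_transpose (A : Matrix m n ℝ) : frob Aᵀ = frob A := by
  simp only [frob, transpose_apply]
  rw [Finset.sum_comm]

lemma frob_transpose_mul_mul_of_orthogonal [DecidableEq m] [DecidableEq n]
    {P : Matrix m m ℝ} {V : Matrix n n ℝ} (hP : Pᵀ * P = 1) (hV : Vᵀ * V = 1)
    (M : Matrix m n ℝ) : frob (Pᵀ * M * V) = frob M := by
  have hPMV : (Pᵀ * M * V)ᵀ * (Pᵀ * M * V) = Vᵀ * (Mᵀ * M * V) := by
    simp only [transpose_mul, transpose_transpose, Matrix.mul_assoc]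
    rw [← Matrix.mul_assoc P Pᵀ, mul_eq_one_comm.mp hP, Matrix.one_mul]
  rw [frob_eq_sqrt_trace, frob_eq_sqrt_trace, hPMV, trace_mul_comm, Matrix.mul_assoc,
    Matrix.mul_assoc, mul_eq_one_comm.mp hV, Matrix.mul_one]

end Frobenius

lemma sq_le_of_mul_eq_sub {c s z f g : ℝ} (hc : 0 < c) (hs : 2 * c ≤ s) (h : s * z = f - g) :
    z ^ 2 ≤ (f ^ 2 + g ^ 2) / (2 * c ^ 2) := by
  rw [le_div_iff₀ (by positivity)]
  have hs2 : (2 * c) ^ 2 * z ^ 2 ≤ s ^ 2 * z ^ 2 :=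
    mul_le_mul_of_nonneg_right (pow_le_pow_left₀ (by positivity) hs 2) (sq_nonneg z)
  nlinarith [sq_nonneg (f + g), congrArg (· ^ 2) h]

lemma frob_sq_le_of_diagonal_mul_add_mul_diagonal {m n : Type*} [Fintype m] [Fintype n]
    [DecidableEq m] [DecidableEq n] {c : ℝ} (hc : 0 < c) {σ : m → ℝ} {τ : n → ℝ}
    (hσ : ∀ i, c ≤ σ i) (hτ : ∀ j, c ≤ τ j) {Z F G : Matrix m n ℝ}
    (h : diagonal σ * Z + Z * diagonal τ = F - G) :
    frob Z ^ 2 ≤ (frob F ^ 2 + frob G ^ 2) / (2 * c ^ 2) := by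
  have hentry : ∀ i j, Z i j ^ 2 ≤ (F i j ^ 2 + G i j ^ 2) / (2 * c ^ 2) := by
    intro i j
    have hij := congrFun (congrFun h i) j
    simp only [Matrix.add_apply, Matrix.sub_apply, diagonal_mul, mul_diagonal] at hij
    exact sq_le_of_mul_eq_sub (s := σ i + τ j) hc (by linarith [hσ i, hτ j]) (by linarith)
  rw [frob_sq, frob_sq, frob_sq, add_div, Finset.sum_div, Finset.sum_div,
    ← Finset.sum_add_distrib]
  refine Finset.sum_le_sum fun i _ => ?_
  rw [Finset.sum_div, Finset.sum_div, ← Finset.sum_add_distrib]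
  exact Finset.sum_le_sum fun j _ => (hentry i j).trans_eq (add_div _ _ _)

section Square

variable {ι : Type*} [Fintype ι] [DecidableEq ι]

lemma frob_mul_transpose_sub_le {c : ℝ} (hc : 0 < c) {U₁ V₁ U₂ V₂ : Matrix ι ι ℝ}
    (hU₁ : U₁ᵀ * U₁ = 1) (hV₁ : V₁ᵀ * V₁ = 1) (hU₂ : U₂ᵀ * U₂ = 1) (hV₂ : V₂ᵀ * V₂ = 1)
    {σ₁ σ₂ : ι → ℝ} (hσ₁ : ∀ i, c ≤ σ₁ i) (hσ₂ : ∀ i, c ≤ σ₂ i) :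
    frob (U₁ * V₁ᵀ - U₂ * V₂ᵀ) ≤
      frob (U₁ * diagonal σ₁ * V₁ᵀ - U₂ * diagonal σ₂ * V₂ᵀ) / c := by
  set E := U₁ * diagonal σ₁ * V₁ᵀ - U₂ * diagonal σ₂ * V₂ᵀ
  set Z := V₁ᵀ * V₂ - U₁ᵀ * U₂
  have cancel₁ : ∀ M : Matrix ι ι ℝ, U₁ᵀ * (U₁ * M) = M := fun M => by
    rw [← Matrix.mul_assoc, hU₁, Matrix.one_mul]
  have cancel₂ : ∀ M : Matrix ι ι ℝ, V₁ᵀ * (V₁ * M) = M := fun M => by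
    rw [← Matrix.mul_assoc, hV₁, Matrix.one_mul]
  have hZ : U₁ᵀ * (U₁ * V₁ᵀ - U₂ * V₂ᵀ) * V₂ = Z := by
    simp only [Z, Matrix.mul_sub, Matrix.sub_mul, Matrix.mul_assoc, cancel₁, hV₂, Matrix.mul_one]
  have hsylvester : diagonal σ₁ * Z + Z * diagonal σ₂ = U₁ᵀ * E * V₂ - V₁ᵀ * Eᵀ * U₂ := by
    simp only [E, Z, transpose_sub, transpose_mul, transpose_transpose, diagonal_transpose,
      Matrix.mul_sub, Matrix.sub_mul, Matrix.mul_assoc, cancel₁, cancel₂, hU₂, hV₂,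
      Matrix.mul_one]
    abel
  have hZsq := frob_sq_le_of_diagonal_mul_add_mul_diagonal hc hσ₁ hσ₂ hsylvester
  rw [← hZ, frob_transpose_mul_mul_of_orthogonal hU₁ hV₂,
    frob_transpose_mul_mul_of_orthogonal hU₁ hV₂, frob_transpose_mul_mul_of_orthogonal hV₁ hU₂,
    frob_transpose] at hZsq
  refine (pow_le_pow_iff_left₀ (frob_nonneg _) (div_nonneg (frob_nonneg _) hc.le)
    two_ne_zero).1 ?_
  calc _ ≤ (frob E ^ 2 + frob E ^ 2) / (2 * c ^ 2) := hZsq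
    _ = (frob E / c) ^ 2 := by field_simp; ring

def HasSVD (A : Matrix ι ι ℝ) (σ : ι → ℝ) : Prop :=
  ∃ U V : Matrix ι ι ℝ, Uᵀ * U = 1 ∧ Vᵀ * V = 1 ∧ A = U * diagonal σ * Vᵀ

lemma transpose_mul_orthogonal_eq_one {Q V : Matrix ι ι ℝ} (hQ : Q * Qᵀ = 1) (hV : Vᵀ * V = 1) :
    (Qᵀ * V)ᵀ * (Qᵀ * V) = 1 := by
  rw [transpose_mul, transpose_transpose, Matrix.mul_assoc, ← Matrix.mul_assoc Q, hQ,
    Matrix.one_mul, hV]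

lemma svd_mul_orthogonal (U V Q : Matrix ι ι ℝ) (σ : ι → ℝ) :
    U * diagonal σ * Vᵀ * Q = U * diagonal σ * (Qᵀ * V)ᵀ := by
  simp only [transpose_mul, transpose_transpose, Matrix.mul_assoc]

lemma HasSVD.mul_orthogonal {A Q : Matrix ι ι ℝ} {σ : ι → ℝ} (hA : HasSVD A σ) (hQ : Q * Qᵀ = 1) :
    HasSVD (A * Q) σ := by
  obtain ⟨U, V, hU, hV, rfl⟩ := hA
  exact ⟨U, Qᵀ * V, hU, transpose_mul_orthogonal_eq_one hQ hV, svd_mul_orthogonal U V Q σ⟩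

lemma diagonal_mul_diagonal_inv {g : ι → ℝ} (hg : ∀ i, g i ≠ 0) :
    diagonal g * diagonal g⁻¹ = 1 := by
  rw [diagonal_mul_diagonal, ← diagonal_one]
  exact congrArg diagonal (funext fun i => mul_inv_cancel₀ (hg i))

end Square

section Polar

variable {d : ℕ}

open scoped MatrixOrder in
lemma polar_eq_mul_inv_sqrt (M : Matrix (Fin d) (Fin d) ℝ) :
    polar M = M * (CFC.sqrt (Mᵀ * M))⁻¹ := by
  have hpsd := posSemidef_conjTranspose_mul_self M
  rw [← conjTranspose_eq_transpose_of_trivial, CFC.sqrt_eq_real_sqrt _ hpsd.nonneg,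
    cfcₙ_eq_cfc (hf := Real.continuous_sqrt.continuousOn) (hf0 := Real.sqrt_zero),
    hpsd.1.cfc_eq, IsHermitian.cfc, Unitary.conjStarAlgAut_apply, RCLike.ofReal_real_eq_id,
    Function.id_comp]
  rfl

open scoped MatrixOrder in
lemma polar_of_svd {U V : Matrix (Fin d) (Fin d) ℝ} (hU : Uᵀ * U = 1) (hV : Vᵀ * V = 1)
    {g : Fin d → ℝ} (hg : ∀ i, 0 < g i) : polar (U * diagonal g * Vᵀ) = U * Vᵀ := by
  have cancelU : ∀ M : Matrix (Fin d) (Fin d) ℝ, Uᵀ * (U * M) = M := fun M => by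
    rw [← Matrix.mul_assoc, hU, Matrix.one_mul]
  have cancelV : ∀ M : Matrix (Fin d) (Fin d) ℝ, Vᵀ * (V * M) = M := fun M => by
    rw [← Matrix.mul_assoc, hV, Matrix.one_mul]
  have hgg : ∀ M : Matrix (Fin d) (Fin d) ℝ, diagonal g * (diagonal g⁻¹ * M) = M := fun M => by
    rw [← Matrix.mul_assoc, diagonal_mul_diagonal_inv fun i => (hg i).ne', Matrix.one_mul]
  have hsqrt : CFC.sqrt ((U * diagonal g * Vᵀ)ᵀ * (U * diagonal g * Vᵀ)) =
      V * diagonal g * Vᵀ := by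
    refine CFC.sqrt_unique ?_ ?_
    · simp only [transpose_mul, transpose_transpose, diagonal_transpose, Matrix.mul_assoc,
        cancelU, cancelV]
    · simpa only [conjTranspose_eq_transpose_of_trivial] using
        ((posSemidef_diagonal_iff.mpr fun i => (hg i).le).mul_mul_conjTranspose_same V).nonneg
  have hinv : (V * diagonal g * Vᵀ)⁻¹ = V * diagonal g⁻¹ * Vᵀ := by
    refine inv_eq_right_inv ?_
    simp only [Matrix.mul_assoc, cancelV, hgg]
    exact mul_eq_one_comm.mp hV
  rw [polar_eq_mul_inv_sqrt, hsqrt, hinv]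
  simp only [Matrix.mul_assoc, cancelV, hgg]

lemma polar_mul_orthogonal_of_hasSVD {A Q : Matrix (Fin d) (Fin d) ℝ} {σ : Fin d → ℝ}
    (hA : HasSVD A σ) (hσ : ∀ i, 0 < σ i) (hQ : Q * Qᵀ = 1) :
    polar (A * Q) = polar A * Q := by
  obtain ⟨U, V, hU, hV, rfl⟩ := hA
  rw [svd_mul_orthogonal, polar_of_svd hU (transpose_mul_orthogonal_eq_one hQ hV) hσ,
    polar_of_svd hU hV hσ]
  simp only [transpose_mul, transpose_transpose, Matrix.mul_assoc]

lemma frob_polar_sub_polar_le {c : ℝ} (hc : 0 < c) {A B : Matrix (Fin d) (Fin d) ℝ}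
    {σ τ : Fin d → ℝ} (hA : HasSVD A σ) (hB : HasSVD B τ) (hσ : ∀ i, c ≤ σ i)
    (hτ : ∀ i, c ≤ τ i) : frob (polar A - polar B) ≤ c⁻¹ * frob (A - B) := by
  obtain ⟨U₁, V₁, hU₁, hV₁, rfl⟩ := hA
  obtain ⟨U₂, V₂, hU₂, hV₂, rfl⟩ := hB
  rw [polar_of_svd hU₁ hV₁ fun i => hc.trans_le (hσ i),
    polar_of_svd hU₂ hV₂ fun i => hc.trans_le (hτ i), inv_mul_eq_div]
  exact frob_mul_transpose_sub_le hc hU₁ hV₁ hU₂ hV₂ hσ hτ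

end Polar

section SingularValues

variable {d : ℕ}

lemma exists_orthogonal_transpose_mul_self_eq (A : Matrix (Fin d) (Fin d) ℝ) :
    ∃ V : Matrix (Fin d) (Fin d) ℝ, Vᵀ * V = 1 ∧
      Aᵀ * A = V * diagonal (fun i => sv A i ^ 2) * Vᵀ := by
  let hH : (Aᵀ * A).IsHermitian := isHermitian_conjTranspose_mul_self A
  have hsv : (fun i => sv A i ^ 2) = hH.eigenvalues := funext fun i =>
    Real.sq_sqrt (eigenvalues_conjTranspose_mul_self_nonneg A i)
  have hunitary := Unitary.mem_iff.mp hH.eigenvectorUnitary.2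
  refine ⟨hH.eigenvectorUnitary, ?_, ?_⟩
  · simpa only [star_eq_conjTranspose, conjTranspose_eq_transpose_of_trivial] using hunitary.1
  · have hspec := hH.spectral_theorem
    rwa [Unitary.conjStarAlgAut_apply, RCLike.ofReal_real_eq_id, Function.id_comp, ← hsv,
      star_eq_conjTranspose, conjTranspose_eq_transpose_of_trivial] at hspec

lemma hasSVD_sv {A : Matrix (Fin d) (Fin d) ℝ} (h : ∀ i, 0 < sv A i) : HasSVD A (sv A) := by
  obtain ⟨V, hV, hAA⟩ := exists_orthogonal_transpose_mul_self_eq A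
  have hgg := diagonal_mul_diagonal_inv fun i => (h i).ne'
  refine ⟨A * V * diagonal (sv A)⁻¹, V, ?_, hV, ?_⟩
  · have cancelV : ∀ M : Matrix (Fin d) (Fin d) ℝ, Vᵀ * (V * M) = M := fun M => by
      rw [← Matrix.mul_assoc, hV, Matrix.one_mul]
    calc (A * V * diagonal (sv A)⁻¹)ᵀ * (A * V * diagonal (sv A)⁻¹)
        = diagonal (sv A)⁻¹ * (Vᵀ * ((Aᵀ * A) * (V * diagonal (sv A)⁻¹))) := by
          simp only [transpose_mul, diagonal_transpose, Matrix.mul_assoc]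
      _ = 1 := by
          rw [hAA]
          simp only [Matrix.mul_assoc, cancelV, diagonal_mul_diagonal, Pi.inv_apply]
          rw [← diagonal_one]
          congr 1 with i
          have := (h i).ne'
          field_simp
  · rw [Matrix.mul_assoc (A * V), mul_eq_one_comm.mp hgg, Matrix.mul_one, Matrix.mul_assoc,
      mul_eq_one_comm.mp hV, Matrix.mul_one]

lemma le_sv_of_le_smin {A : Matrix (Fin d) (Fin d) ℝ} {c : ℝ} (h : c ≤ smin A) (i : Fin d) :
    c ≤ sv A i :=
  h.trans (ciInf_le ⟨0, by rintro x ⟨j, rfl⟩; exact Real.sqrt_nonneg _⟩ i)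

end SingularValues

section Blocks

variable {n d : ℕ}

lemma Pn_mul_orthogonal {M : Matrix (Fin n × Fin d) (Fin d) ℝ} {Q : Matrix (Fin d) (Fin d) ℝ}
    {σ : Fin n → Fin d → ℝ} (hM : ∀ i, HasSVD (blk M i) (σ i)) (hσ : ∀ i j, 0 < σ i j)
    (hQ : Q * Qᵀ = 1) : Pn (M * Q) = Pn M * Q := by
  ext ⟨i, a⟩ b
  change polar (blk M i * Q) a b = (polar (blk M i) * Q) a b
  rw [polar_mul_orthogonal_of_hasSVD (hM i) (hσ i) hQ]

lemma frob_eq_sqrt_sum_blk (M : Matrix (Fin n × Fin d) (Fin d) ℝ) :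
    frob M = Real.sqrt (∑ i, frob (blk M i) ^ 2) := by
  simp only [frob, Fintype.sum_prod_type, blk, of_apply]
  refine congrArg _ (Finset.sum_congr rfl fun i _ => ?_)
  exact (Real.sq_sqrt (by positivity)).symm

lemma sqrt_sum_sq_le_mul_frob {a : Fin n → ℝ} {K : ℝ} (hK : 0 ≤ K)
    {M : Matrix (Fin n × Fin d) (Fin d) ℝ} (ha : ∀ i, 0 ≤ a i)
    (h : ∀ i, a i ≤ K * frob (blk M i)) : Real.sqrt (∑ i, a i ^ 2) ≤ K * frob M := by
  rw [frob_eq_sqrt_sum_blk, ← Real.sqrt_sq hK, ← Real.sqrt_mul (sq_nonneg K), Finset.mul_sum]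
  refine Real.sqrt_le_sqrt (Finset.sum_le_sum fun i _ => ?_)
  rw [← mul_pow]
  exact pow_le_pow_left₀ (ha i) (h i) 2

end Blocks

lemma dF_le_mul_dF {m : Type*} [Fintype m] {d : ℕ} {X Y X' Y' : Matrix m (Fin d) ℝ} {K : ℝ}
    (hK : 0 ≤ K)
    (h : ∀ Q : Matrix (Fin d) (Fin d) ℝ, IsOrtho Q → frob (X' - Y' * Q) ≤ K * frob (X - Y * Q)) :
    dF X' Y' ≤ K * dF X Y := by
  have hbdd : BddBelow {r : ℝ | ∃ Q, IsOrtho Q ∧ r = frob (X' - Y' * Q)} :=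
    ⟨0, by rintro r ⟨Q, -, rfl⟩; exact frob_nonneg _⟩
  have hne : {r : ℝ | ∃ Q, IsOrtho Q ∧ r = frob (X - Y * Q)}.Nonempty :=
    ⟨_, 1, ⟨by simp, by simp⟩, rfl⟩
  rw [dF, dF, ← smul_eq_mul, ← Real.sInf_smul_of_nonneg hK]
  refine le_csInf hne.smul_set ?_
  rintro _ ⟨_, ⟨Q, hQ, rfl⟩, rfl⟩
  exact (csInf_le hbdd ⟨Q, hQ, rfl⟩).trans (h Q hQ)

theorem Pn_lipschitz_general (n d : ℕ) (c : ℝ) (hc : 0 < c)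
    (X Y : Matrix (Fin n × Fin d) (Fin d) ℝ)
    (hXs : ∀ i : Fin n, c ≤ smin (blk X i))
    (hYs : ∀ i : Fin n, c ≤ smin (blk Y i)) :
    (∀ Q : Matrix (Fin d) (Fin d) ℝ, IsOrtho Q →
      Real.sqrt (∑ i : Fin n,
          frob (polar (blk X i) - polar (blk (Y * Q) i)) ^ 2) ≤
        4 / (2 * c) * 2 * frob (X - Y * Q)) ∧
    dF (Pn X) (Pn Y) ≤ (4 / c) * dF X Y := by
  have hXsv i := le_sv_of_le_smin (hXs i)
  have hYsv i := le_sv_of_le_smin (hYs i)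
  have hXsvd i := hasSVD_sv fun j => hc.trans_le (hXsv i j)
  have hYsvd i := hasSVD_sv fun j => hc.trans_le (hYsv i j)
  have hbound : ∀ Q, IsOrtho Q → Real.sqrt (∑ i : Fin n,
      frob (polar (blk X i) - polar (blk (Y * Q) i)) ^ 2) ≤ c⁻¹ * frob (X - Y * Q) :=
    fun Q hQ => sqrt_sum_sq_le_mul_frob (inv_nonneg.mpr hc.le) (fun _ => frob_nonneg _)
      fun i => frob_polar_sub_polar_le hc (hXsvd i) ((hYsvd i).mul_orthogonal hQ.1)
        (hXsv i) (hYsv i)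
  have hconst : c⁻¹ ≤ 4 / c := by
    rw [inv_eq_one_div]; gcongr; norm_num
  refine ⟨fun Q hQ => (hbound Q hQ).trans ?_, dF_le_mul_dF (by positivity) fun Q hQ => ?_⟩
  · rw [show 4 / (2 * c) * 2 = 4 / c by field_simp]
    exact mul_le_mul_of_nonneg_right hconst (frob_nonneg _)
  · rw [← Pn_mul_orthogonal hYsvd (fun i j => hc.trans_le (hYsv i j)) hQ.1,
      frob_eq_sqrt_sum_blk]
    exact (hbound Q hQ).trans (mul_le_mul_of_nonneg_right hconst (frob_nonneg _))

/-- Blockwise Lipschitz bound for the polar projection `P_n`. -/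
theorem Pn_lipschitz (n d : ℕ) (c : ℝ) (hc : 0 < c)
    (X Y : Matrix (Fin n × Fin d) (Fin d) ℝ)
    (hXinv : ∀ i : Fin n, IsUnit (blk X i).det)
    (hYinv : ∀ i : Fin n, IsUnit (blk Y i).det)
    (hXs : ∀ i : Fin n, c ≤ smin (blk X i))
    (hYs : ∀ i : Fin n, c ≤ smin (blk Y i)) :
    (∀ Q : Matrix (Fin d) (Fin d) ℝ, IsOrtho Q →
      Real.sqrt (∑ i : Fin n,
          frob (polar (blk X i) - polar (blk (Y * Q) i)) ^ 2) ≤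
        4 / (2 * c) * 2 * frob (X - Y * Q)) ∧
    dF (Pn X) (Pn Y) ≤ (4 / c) * dF X Y :=
  Pn_lipschitz_general n d c hc X Y hXs hYs
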